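/- arXiv:2307.02880 — 6 statements merged into one kernel-verified Lean document; each statement's English description precedes it below -/
import Mathlib

section
/- In the braid group on n+1 strands (the Artin group of type A_n with standard generators s_1, ..., s_n), the square of the Garside element satisfies Δ[A_n]^2 = (s_1 ⋯ s_{n-1} s_n^2 s_{n-1} ⋯ s_1)(s_2 ⋯ s_{n-1} s_n^2 s_{n-1} ⋯ s_2) ⋯ (s_{n-1} s_n^2 s_{n-1}) s_n^2. -/
/-- Braid relator `x y x (y x y)⁻¹`. -/
def braidRel {α : Type} (x y : FreeGroup α) : FreeGroup α := x * y * x * (y * x * y)⁻¹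

/-- Commutation relator `x y (y x)⁻¹`. -/
def commRel {α : Type} (x y : FreeGroup α) : FreeGroup α := x * y * (y * x)⁻¹

/-- Relators for the Artin group of type `A_m` on generators `s_1, …, s_m`
(0-based indices `0, …, m-1`). -/
def ArelA (m : ℕ) : Set (FreeGroup (Fin m)) :=
  {r | ∃ i j : Fin m,
    (j.val = i.val + 1 ∧ r = braidRel (FreeGroup.of i) (FreeGroup.of j)) ∨
    (i.val + 2 ≤ j.val ∧ r = commRel (FreeGroup.of i) (FreeGroup.of j))}

/-- The Artin group of type `A_m` (braid group on `m+1` strands). -/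
abbrev ArtinA (m : ℕ) := PresentedGroup (ArelA m)

/-- The generator `s_{i+1}` of `A[A_m]` (0-based index `i`; junk value `1` if `i ≥ m`). -/
def gA (m : ℕ) (i : ℕ) : ArtinA m :=
  if h : i < m then PresentedGroup.of ⟨i, h⟩ else 1

/-- 0-based adjacency in the Coxeter graph `D_n` on vertices `0, …, n-1`
(vertex `i` corresponds to `t_{i+1}`): edges `(i, i+1)` for `i+1 ≤ n-2`
and the edge `(n-3, n-1)`. -/
def adjD (n : ℕ) (i j : ℕ) : Prop :=
  (j = i + 1 ∧ j ≤ n - 2) ∨ (i = n - 3 ∧ j = n - 1)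

/-- Relators for the Artin group of type `D_n`: braid relation along each edge,
commutation for non-adjacent pairs. -/
def ArelD (n : ℕ) : Set (FreeGroup (Fin n)) :=
  {r | ∃ i j : Fin n, i.val < j.val ∧
    ((adjD n i.val j.val ∧ r = braidRel (FreeGroup.of i) (FreeGroup.of j)) ∨
     (¬ adjD n i.val j.val ∧ r = commRel (FreeGroup.of i) (FreeGroup.of j)))}

/-- The Artin group of type `D_n`. -/
abbrev ArtinD (n : ℕ) := PresentedGroup (ArelD n)

/-- The generator `t_{i+1}` of `A[D_n]` (0-based index `i`; junk value `1` if `i ≥ n`). -/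
def gD (n : ℕ) (i : ℕ) : ArtinD n :=
  if h : i < n then PresentedGroup.of ⟨i, h⟩ else 1

/-- The word `(s_m ⋯ s_1)(s_m ⋯ s_2) ⋯ (s_m s_{m-1}) s_m` (1-based) evaluated on
a family `s` of group elements (0-based). This is the Garside element of type `A_m`. -/
def deltaAin {G : Type} [Group G] (m : ℕ) (s : ℕ → G) : G :=
  ((List.range m).map (fun k => ((List.range (m - k)).map (fun j => s (m - 1 - j))).prod)).prod

/-- The Garside element `Δ[A_m]`. -/
def deltaA (m : ℕ) : ArtinA m := deltaAin m (gA m)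

/-- The factor `t_{k+1} ⋯ t_{n-2} t_{n-1} t_n t_{n-2} ⋯ t_{k+1}` (1-based) of `Δ[D_n]`,
0-based index `k`. -/
def factorD {G : Type} [Group G] (n : ℕ) (t : ℕ → G) (k : ℕ) : G :=
  ((List.range (n - 2 - k)).map (fun j => t (k + j))).prod * t (n - 2) * t (n - 1) *
    ((List.range (n - 2 - k)).map (fun j => t (n - 3 - j))).prod

/-- The word giving the Garside element of type `D_n`, evaluated on a family `t`. -/
def deltaDin {G : Type} [Group G] (n : ℕ) (t : ℕ → G) : G :=
  ((List.range (n - 1)).map (factorD n t)).prod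

/-- The Garside element `Δ[D_n]`. -/
def deltaD (n : ℕ) : ArtinD n := deltaDin n (gD n)

/-- The Garside element `Δ_Y` of the standard parabolic subgroup of `A[D_n]`
generated by `Y = {t_1, …, t_{n-1}}` (a copy of `A[A_{n-1}]`). -/
def deltaY (n : ℕ) : ArtinD n := deltaAin (n - 1) (gD n)

/-- `κ = 2` if `n` is odd and `κ = 1` if `n` is even. -/
def kap (n : ℕ) : ℤ := if Odd n then 2 else 1

/-- The central quotient `A[D_n]/Z(A[D_n])`. -/
abbrev AZD (n : ℕ) := ArtinD n ⧸ Subgroup.center (ArtinD n)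

/-! Write `D_m = s_m ⋯ s_1` and `U_m = s_1 ⋯ s_m`. The braid relations give `s_i D_m = D_m s_{i+1}`
for `i < m`, so conjugation by `D_m` shifts indices by one. Since `Δ_m = D_m Δ'_{m-1}`, with `Δ'`
built on `s_2, …, s_m`, this gives `Δ_m = Δ_{m-1} D_m`, and shifting `U_{m-1}` through `D_m` gives
`Δ_m = U_m Δ_{m-1}` by induction. Hence `Δ_m² = U_m Δ_{m-1}² D_m = U_m D_m Δ'_{m-1}²`: here
`U_m D_m` is the first factor of the product and induction on the shifted generators supplies
the others. -/

theorem List.prod_map_range_congr {M : Type*} [Monoid M] {m m' : ℕ} {f g : ℕ → M} (hm : m = m')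
    (h : ∀ j < m, f j = g j) : ((List.range m).map f).prod = ((List.range m').map g).prod := by
  subst hm
  exact congr_arg _ (List.map_congr_left fun j hj => h j (List.mem_range.1 hj))

theorem List.prod_map_mul_eq_mul_prod_map {M α : Type*} [Monoid M] (d : M) {s t : α → M}
    {l : List α} (h : ∀ a ∈ l, s a * d = d * t a) : (l.map s).prod * d = d * (l.map t).prod := by
  induction l with
  | nil => simp
  | cons a l ih =>
    simp only [List.forall_mem_cons] at h
    simp only [List.map_cons, List.prod_cons, mul_assoc, ih h.2]
    rw [← mul_assoc, h.1, mul_assoc]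

section

variable {G : Type} [Group G]

def descWord (s : ℕ → G) (m : ℕ) : G := ((List.range m).map fun j => s (m - 1 - j)).prod

def ascWord (s : ℕ → G) (m : ℕ) : G := ((List.range m).map s).prod

def garsideSqWord (m : ℕ) (s : ℕ → G) : G :=
  ((List.range m).map (fun k =>
    ((List.range (m - 1 - k)).map (fun j => s (k + j))).prod * s (m - 1) * s (m - 1) *
      ((List.range (m - 1 - k)).map (fun j => s (m - 2 - j))).prod)).prod

theorem descWord_succ (s : ℕ → G) (m : ℕ) : descWord s (m + 1) = s m * descWord s m := by
  rw [descWord, List.prod_range_succ', Nat.add_sub_cancel, Nat.sub_zero]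
  exact congr_arg _ (List.prod_map_range_congr rfl fun j _ => congr_arg s (by omega))

theorem ascWord_succ (s : ℕ → G) (m : ℕ) : ascWord s (m + 1) = ascWord s m * s m :=
  List.prod_range_succ s m

theorem deltaAin_succ (s : ℕ → G) (m : ℕ) :
    deltaAin (m + 1) s = descWord s (m + 1) * deltaAin m (fun i => s (i + 1)) := by
  rw [deltaAin, List.prod_range_succ', Nat.sub_zero]
  refine congr_arg _ (List.prod_map_range_congr rfl fun k _ => ?_)
  exact List.prod_map_range_congr (by omega) fun j hj => congr_arg s (by omega)

theorem garsideSqWord_succ (s : ℕ → G) (m : ℕ) :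
    garsideSqWord (m + 1) s =
      ascWord s (m + 1) * descWord s (m + 1) * garsideSqWord m (fun i => s (i + 1)) := by
  rw [garsideSqWord, List.prod_range_succ', ascWord_succ, descWord_succ, garsideSqWord]
  congr 1
  · have hasc : ((List.range (m + 1 - 1 - 0)).map fun j => s (0 + j)).prod = ascWord s m :=
      List.prod_map_range_congr (by omega) fun j _ => congr_arg s (by omega)
    have hdesc : ((List.range (m + 1 - 1 - 0)).map fun j => s (m + 1 - 2 - j)).prod =
        descWord s m :=
      List.prod_map_range_congr (by omega) fun j _ => congr_arg s (by omega)
    rw [hasc, hdesc, Nat.add_sub_cancel]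
    simp only [mul_assoc]
  · refine List.prod_map_range_congr rfl fun k hk => ?_
    refine congr_arg₂ _ (congr_arg₂ _ (congr_arg₂ _ ?_ ?_) ?_) ?_ <;>
      first
      | exact List.prod_map_range_congr (by omega) fun j _ => congr_arg s (by omega)
      | exact congr_arg s (by omega)

theorem deltaAin_mul_eq_mul_deltaAin {m : ℕ} {s t : ℕ → G} {d : G}
    (h : ∀ i < m, s i * d = d * t i) : deltaAin m s * d = d * deltaAin m t :=
  List.prod_map_mul_eq_mul_prod_map d fun _ hk =>
    List.prod_map_mul_eq_mul_prod_map d fun j hj => h _ (by simp at hk hj; omega)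

structure BraidRelations (m : ℕ) (s : ℕ → G) : Prop where
  braid : ∀ i, i + 2 ≤ m → s i * s (i + 1) * s i = s (i + 1) * s i * s (i + 1)
  comm : ∀ i j, i + 2 ≤ j → j < m → s i * s j = s j * s i

namespace BraidRelations

variable {m : ℕ} {s : ℕ → G}

theorem mono (h : BraidRelations m s) {k : ℕ} (hk : k ≤ m) : BraidRelations k s :=
  ⟨fun i hi => h.braid i (hi.trans hk), fun i j hij hj => h.comm i j hij (hj.trans_le hk)⟩

theorem shift (h : BraidRelations (m + 1) s) : BraidRelations m (fun i => s (i + 1)) :=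
  ⟨fun i hi => h.braid (i + 1) (by omega),
    fun i j hij hj => h.comm (i + 1) (j + 1) (by omega) (by omega)⟩

theorem mul_descWord (h : BraidRelations (m + 1) s) {i : ℕ} (hi : i < m) :
    s i * descWord s (m + 1) = descWord s (m + 1) * s (i + 1) := by
  induction m with
  | zero => omega
  | succ m ih =>
    rw [descWord_succ]
    rcases Nat.lt_or_eq_of_le (Nat.le_of_lt_succ hi) with hi | rfl
    · rw [← mul_assoc, h.comm i (m + 1) (by omega) (by omega), mul_assoc,
        ih (h.mono (by omega)) hi, mul_assoc]
    · have hcomm : Commute (descWord s i) (s (i + 1)) :=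
        Commute.list_prod_left _ _ fun x hx => by
          obtain ⟨j, hj, rfl⟩ := List.mem_map.1 hx
          rw [List.mem_range] at hj
          exact h.comm _ _ (by omega) (by omega)
      rw [descWord_succ, ← mul_assoc, ← mul_assoc, h.braid i (by omega)]
      simp only [mul_assoc, hcomm.eq]

theorem deltaAin_succ_eq_deltaAin_mul (h : BraidRelations (m + 1) s) :
    deltaAin (m + 1) s = deltaAin m s * descWord s (m + 1) := by
  rw [deltaAin_succ, deltaAin_mul_eq_mul_deltaAin fun i hi => h.mul_descWord hi]

theorem deltaAin_succ_eq_ascWord_mul (h : BraidRelations (m + 1) s) :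
    deltaAin (m + 1) s = ascWord s (m + 1) * deltaAin m s := by
  induction m generalizing s with
  | zero => simp [deltaAin, ascWord]
  | succ m ih =>
    have hasc : ascWord s (m + 1) * descWord s (m + 2) =
        descWord s (m + 2) * ascWord (fun i => s (i + 1)) (m + 1) :=
      List.prod_map_mul_eq_mul_prod_map _ fun i hi => h.mul_descWord (by simpa using hi)
    rw [deltaAin_succ, ih h.shift, ← mul_assoc, ← hasc, descWord_succ, ← mul_assoc,
      ← ascWord_succ, mul_assoc, ← deltaAin_succ]

theorem deltaAin_sq (h : BraidRelations m s) : deltaAin m s ^ 2 = garsideSqWord m s := by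
  induction m generalizing s with
  | zero => simp [deltaAin, garsideSqWord]
  | succ m ih =>
    have hshift : deltaAin m s * descWord s (m + 1) =
        descWord s (m + 1) * deltaAin m (fun i => s (i + 1)) :=
      deltaAin_mul_eq_mul_deltaAin fun i hi => h.mul_descWord hi
    calc deltaAin (m + 1) s ^ 2
        = ascWord s (m + 1) * deltaAin m s * (deltaAin m s * descWord s (m + 1)) := by
          rw [sq]
          nth_rw 1 [h.deltaAin_succ_eq_ascWord_mul]
          rw [h.deltaAin_succ_eq_deltaAin_mul]
      _ = ascWord s (m + 1) * descWord s (m + 1) * deltaAin m (fun i => s (i + 1)) ^ 2 := by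
          simp only [mul_assoc]
          rw [hshift, ← mul_assoc (deltaAin m s), hshift]
          simp only [sq, mul_assoc]
      _ = garsideSqWord (m + 1) s := by rw [ih h.shift, garsideSqWord_succ]

end BraidRelations

end

theorem braidRelations_gA (n : ℕ) : BraidRelations n (gA n) where
  braid i hi := by
    have := PresentedGroup.mk_eq_mk_of_mul_inv_mem
      (show braidRel (.of ⟨i, by omega⟩) (.of ⟨i + 1, hi⟩) ∈ ArelA n from ⟨_, _, .inl ⟨rfl, rfl⟩⟩)
    simp only [gA, dif_pos (show i < n by omega), dif_pos (show i + 1 < n by omega)]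
    simp only [map_mul] at this
    exact this
  comm i j hij hj := by
    have := PresentedGroup.mk_eq_mk_of_mul_inv_mem
      (show commRel (.of ⟨i, by omega⟩) (.of ⟨j, hj⟩) ∈ ArelA n from ⟨_, _, .inr ⟨hij, rfl⟩⟩)
    simp only [gA, dif_pos (show i < n by omega), dif_pos hj]
    simp only [map_mul] at this
    exact this

theorem garside_sq_of_typeA_general (n : ℕ) :
    (deltaA n) ^ 2 =
      ((List.range n).map (fun k =>
        ((List.range (n - 1 - k)).map (fun j => gA n (k + j))).prod *
          gA n (n - 1) * gA n (n - 1) *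
        ((List.range (n - 1 - k)).map (fun j => gA n (n - 2 - j))).prod)).prod :=
  (braidRelations_gA n).deltaAin_sq

/-- (Lemma 5.1 / A5) In the braid group on `n+1` strands (Artin group of type `A_n`
with standard generators `s_1, …, s_n`), the square of the Garside element satisfies
`Δ[A_n]² = (s_1 ⋯ s_{n-1} s_n² s_{n-1} ⋯ s_1) ⋯ (s_{n-1} s_n² s_{n-1}) s_n²`. -/
theorem garside_sq_of_typeA (n : ℕ) (hn : 1 ≤ n) :
    (deltaA n) ^ 2 =
      ((List.range n).map (fun k =>
        ((List.range (n - 1 - k)).map (fun j => gA n (k + j))).prod *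
          gA n (n - 1) * gA n (n - 1) *
        ((List.range (n - 1 - k)).map (fun j => gA n (n - 2 - j))).prod)).prod :=
  garside_sq_of_typeA_general n
end

section
/- For n ≥ 4, the assignments π(t_i) = s_i for 1 ≤ i ≤ n-2 and π(t_{n-1}) = π(t_n) = s_{n-1} define a group homomorphism π : A[D_n] → A[A_{n-1}], the assignments ι(s_i) = t_i for 1 ≤ i ≤ n-1 define a homomorphism ι : A[A_{n-1}] → A[D_n], and π ∘ ι is the identity of A[A_{n-1}]. Consequently π is surjective and ι is injective. -/
section Helpers

variable {α : Type} {rels : Set (FreeGroup α)}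

lemma braid_of_mem {i j : α}
    (h : braidRel (FreeGroup.of i) (FreeGroup.of j) ∈ rels) :
    (PresentedGroup.of i : PresentedGroup rels) * .of j * .of i =
      .of j * .of i * .of j := by
  have h1 : PresentedGroup.mk rels (braidRel (FreeGroup.of i) (FreeGroup.of j)) = 1 :=
    (QuotientGroup.eq_one_iff _).2 (Subgroup.subset_normalClosure h)
  rw [braidRel, map_mul, map_mul, map_mul, map_inv, map_mul, map_mul, mul_inv_eq_one] at h1
  exact h1

lemma comm_of_mem {i j : α}
    (h : commRel (FreeGroup.of i) (FreeGroup.of j) ∈ rels) :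
    (PresentedGroup.of i : PresentedGroup rels) * .of j = .of j * .of i := by
  have h1 : PresentedGroup.mk rels (commRel (FreeGroup.of i) (FreeGroup.of j)) = 1 :=
    (QuotientGroup.eq_one_iff _).2 (Subgroup.subset_normalClosure h)
  rw [commRel, map_mul, map_mul, map_inv, map_mul, mul_inv_eq_one] at h1
  exact h1

lemma gA_braid {m i : ℕ} (h : i + 1 < m) :
    gA m i * gA m (i + 1) * gA m i = gA m (i + 1) * gA m i * gA m (i + 1) := by
  have hi : i < m := by omega
  unfold gA
  rw [dif_pos hi, dif_pos h]
  exact braid_of_mem ⟨⟨i, hi⟩, ⟨i + 1, h⟩, Or.inl ⟨rfl, rfl⟩⟩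

lemma gA_comm {m i j : ℕ} (hij : i + 2 ≤ j) (hj : j < m) :
    gA m i * gA m j = gA m j * gA m i := by
  have hi : i < m := by omega
  unfold gA
  rw [dif_pos hi, dif_pos hj]
  exact comm_of_mem ⟨⟨i, hi⟩, ⟨j, hj⟩, Or.inr ⟨hij, rfl⟩⟩

lemma gD_braid {n i j : ℕ} (hij : i < j) (hj : j < n) (ha : adjD n i j) :
    gD n i * gD n j * gD n i = gD n j * gD n i * gD n j := by
  have hi : i < n := lt_trans hij hj
  unfold gD
  rw [dif_pos hi, dif_pos hj]
  exact braid_of_mem ⟨⟨i, hi⟩, ⟨j, hj⟩, hij, Or.inl ⟨ha, rfl⟩⟩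

lemma gD_comm {n i j : ℕ} (hij : i < j) (hj : j < n) (ha : ¬ adjD n i j) :
    gD n i * gD n j = gD n j * gD n i := by
  have hi : i < n := lt_trans hij hj
  unfold gD
  rw [dif_pos hi, dif_pos hj]
  exact comm_of_mem ⟨⟨i, hi⟩, ⟨j, hj⟩, hij, Or.inr ⟨ha, rfl⟩⟩

end Helpers

/-- For `n ≥ 4`, the assignments `π(t_i) = s_i` (`i ≤ n-2`), `π(t_{n-1}) = π(t_n) = s_{n-1}`
define a homomorphism `π : A[D_n] → A[A_{n-1}]`, the assignments `ι(s_i) = t_i` define a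
homomorphism `ι : A[A_{n-1}] → A[D_n]`, and `π ∘ ι = id`; hence `π` is surjective and
`ι` is injective. (0-based indexing: `gD n i = t_{i+1}`, `gA (n-1) i = s_{i+1}`.) -/
theorem pi_iota_exist (n : ℕ) (hn : 4 ≤ n) :
    ∃ (π : ArtinD n →* ArtinA (n - 1)) (ι : ArtinA (n - 1) →* ArtinD n),
      (∀ i < n, π (gD n i) = gA (n - 1) (min i (n - 2))) ∧
      (∀ i < n - 1, ι (gA (n - 1) i) = gD n i) ∧
      π.comp ι = MonoidHom.id (ArtinA (n - 1)) ∧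
      Function.Surjective π ∧ Function.Injective ι := by
  -- definition of π on generators
  set fπ : Fin n → ArtinA (n - 1) := fun i => gA (n - 1) (min i.val (n - 2)) with hfπ
  have hπrel : ∀ r ∈ ArelD n, FreeGroup.lift fπ r = 1 := by
    rintro r ⟨i, j, hij, ⟨ha, rfl⟩ | ⟨ha, rfl⟩⟩
    · rw [braidRel, map_mul, map_mul, map_mul, map_inv, map_mul, map_mul, mul_inv_eq_one,
        FreeGroup.lift_apply_of, FreeGroup.lift_apply_of, hfπ]
      rcases ha with ⟨h1, h2⟩ | ⟨h1, h2⟩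
      · have e1 : min i.val (n - 2) = i.val := by omega
        have e2 : min j.val (n - 2) = i.val + 1 := by omega
        simp only [e1, e2]
        exact gA_braid (by omega)
      · have e1 : min i.val (n - 2) = n - 3 := by omega
        have e2 : min j.val (n - 2) = (n - 3) + 1 := by omega
        simp only [e1, e2]
        exact gA_braid (by omega)
    · rw [commRel, map_mul, map_mul, map_inv, map_mul, mul_inv_eq_one,
        FreeGroup.lift_apply_of, FreeGroup.lift_apply_of, hfπ]
      simp only
      rcases Nat.lt_or_ge j.val (n - 1) with hjlt | hjge
      · -- j ≤ n - 2, so not adjacent means j ≥ i + 2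
        have e1 : min i.val (n - 2) = i.val := by omega
        have e2 : min j.val (n - 2) = j.val := by omega
        have hj2 : i.val + 2 ≤ j.val := by
          by_contra hc
          exact ha (Or.inl ⟨by omega, by omega⟩)
        rw [e1, e2]
        exact gA_comm hj2 (by omega)
      · -- j = n - 1
        have hj : j.val = n - 1 := by have := j.isLt; omega
        have hine : i.val ≠ n - 3 := fun hc => ha (Or.inr ⟨hc, by omega⟩)
        have e2 : min j.val (n - 2) = n - 2 := by omega
        rcases Nat.lt_or_ge i.val (n - 2) with hilt | hige
        · have e1 : min i.val (n - 2) = i.val := by omega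
          rw [e1, e2]
          exact gA_comm (by omega) (by omega)
        · have hieq : i.val = n - 2 := by omega
          have e1 : min i.val (n - 2) = n - 2 := by omega
          rw [e1, e2]
  set fι : Fin (n - 1) → ArtinD n := fun i => gD n i.val with hfι
  have hιrel : ∀ r ∈ ArelA (n - 1), FreeGroup.lift fι r = 1 := by
    rintro r ⟨i, j, ⟨h1, rfl⟩ | ⟨h1, rfl⟩⟩
    · rw [braidRel, map_mul, map_mul, map_mul, map_inv, map_mul, map_mul, mul_inv_eq_one,
        FreeGroup.lift_apply_of, FreeGroup.lift_apply_of, hfι]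
      simp only
      rw [h1]
      exact gD_braid (by omega) (by have := j.isLt; omega) (Or.inl ⟨rfl, by have := j.isLt; omega⟩)
    · rw [commRel, map_mul, map_mul, map_inv, map_mul, mul_inv_eq_one,
        FreeGroup.lift_apply_of, FreeGroup.lift_apply_of, hfι]
      simp only
      refine gD_comm (by omega) (by have := j.isLt; omega) ?_
      rintro (⟨h2, h3⟩ | ⟨h2, h3⟩)
      · omega
      · have := j.isLt; omega
  refine ⟨PresentedGroup.toGroup hπrel, PresentedGroup.toGroup hιrel, ?_, ?_, ?_, ?_, ?_⟩
  · intro i hi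
    rw [gD, dif_pos hi]
    exact PresentedGroup.toGroup.of hπrel
  · intro i hi
    rw [gA, dif_pos hi]
    exact PresentedGroup.toGroup.of hιrel
  · apply PresentedGroup.ext
    intro x
    rw [MonoidHom.comp_apply, MonoidHom.id_apply, PresentedGroup.toGroup.of hιrel]
    have hx : x.val < n := by have := x.isLt; omega
    rw [hfι]
    simp only
    rw [gD, dif_pos hx, PresentedGroup.toGroup.of hπrel, hfπ]
    simp only
    have e1 : min x.val (n - 2) = x.val := by have := x.isLt; omega
    rw [e1, gA, dif_pos x.isLt]
  · intro a
    refine ⟨PresentedGroup.toGroup hιrel a, ?_⟩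
    have : ∀ x, (PresentedGroup.toGroup hπrel).comp (PresentedGroup.toGroup hιrel) x =
        MonoidHom.id (ArtinA (n - 1)) x := by
      intro x
      congr 1
      apply PresentedGroup.ext
      intro y
      rw [MonoidHom.comp_apply, MonoidHom.id_apply, PresentedGroup.toGroup.of hιrel]
      have hy : y.val < n := by have := y.isLt; omega
      rw [hfι]; simp only
      rw [gD, dif_pos hy, PresentedGroup.toGroup.of hπrel, hfπ]
      simp only
      have e1 : min y.val (n - 2) = y.val := by have := y.isLt; omega
      rw [e1, gA, dif_pos y.isLt]
    simpa using this a
  · intro a b hab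
    have key : ∀ x, (PresentedGroup.toGroup hπrel) ((PresentedGroup.toGroup hιrel) x) = x := by
      intro x
      have : (PresentedGroup.toGroup hπrel).comp (PresentedGroup.toGroup hιrel) =
          MonoidHom.id (ArtinA (n - 1)) := by
        apply PresentedGroup.ext
        intro y
        rw [MonoidHom.comp_apply, MonoidHom.id_apply, PresentedGroup.toGroup.of hιrel]
        have hy : y.val < n := by have := y.isLt; omega
        rw [hfι]; simp only
        rw [gD, dif_pos hy, PresentedGroup.toGroup.of hπrel, hfπ]
        simp only
        have e1 : min y.val (n - 2) = y.val := by have := y.isLt; omega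
        rw [e1, gA, dif_pos y.isLt]
      simpa using DFunLike.congr_fun this x
    rw [← key a, ← key b, hab]
end

section
/- Let G be a free group and let a, b ∈ G satisfy the braid relation aba = bab. Then a = b. -/
/-! The braid relation makes `(a b)³ = (a b a)(b a b)` and `(b a)³ = (b a b)(a b a)` equal.
Roots are unique in a free group, so `a` and `b` commute, and commuting elements satisfying
the braid relation coincide. -/

section Braid

variable {M : Type*} {a b : M}

theorem mul_pow_three_eq_of_braid [Monoid M] (h : a * b * a = b * a * b) :
    (a * b) ^ 3 = (b * a) ^ 3 :=
  calc (a * b) ^ 3 = (a * b * a) * (b * a * b) := by simp only [pow_three, mul_assoc]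
    _ = (b * a * b) * (a * b * a) := by rw [h]
    _ = (b * a) ^ 3 := by simp only [pow_three, mul_assoc]

theorem Commute.eq_of_braid [CancelMonoid M] (hab : Commute a b) (h : a * b * a = b * a * b) :
    a = b := by
  have : a * (a * b) = a * (b * b) :=
    calc a * (a * b) = a * b * a := by rw [mul_assoc, hab.eq]
      _ = b * a * b := h
      _ = a * (b * b) := by rw [← hab.eq, mul_assoc]
  exact mul_right_cancel (mul_left_cancel this)

theorem eq_of_braid [CancelMonoid M] [IsMulTorsionFree M] (h : a * b * a = b * a * b) : a = b :=
  have hab : Commute a b := pow_left_injective three_ne_zero (mul_pow_three_eq_of_braid h)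
  hab.eq_of_braid h

end Braid

/-- In a free group, if `a b a = b a b` then `a = b`. -/
theorem braid_rel_in_free_group {α : Type} (a b : FreeGroup α)
    (h : a * b * a = b * a * b) : a = b :=
  eq_of_braid h
end

section
/- Let n ≥ 4 and let φ_Z be a cyclic endomorphism of A_Z[D_n] = A[D_n]/Z(A[D_n]), say φ_Z(t_{Z,i}) = g_Z for all i. Then g_Z has finite order; more precisely g_Z^{κn(n-1)} = 1, where κ = 2 if n is odd and κ = 1 if n is even. -/
/-!
Conjugation by the Garside element `Δ = Δ[D_n]` permutes the standard generators: it fixes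
`t_1, …, t_{n-2}` and fixes or swaps `t_{n-1}, t_n` according as `n` is even or odd, so `Δ^κ` is
central. This is proved by induction on `n` from `Δ[D_{n+1}] = F · Δ'`, where `Δ'` is `Δ[D_n]`
on `t_2, …, t_{n+1}` and `F = t_1 ⋯ t_{n-1} t_n t_{n+1} t_{n-1} ⋯ t_1`. Braid relations of
type `A` show that `F` commutes with `t_2, …, t_{n-1}` and swaps `t_n, t_{n+1}`; and `t_1`
passes through `F Δ'` because `F = t_1 F' t_1` commutes with the first factor `F'` of `Δ'`.

Since `φ_Z ∘ ξ` sends every generator to `g_Z` and `Δ` is a positive word of length `n(n-1)`,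
it sends `Δ^κ` to `g_Z^{κ n(n-1)}`, which is `1` because `Δ^κ` dies in the central quotient.
-/

namespace ArtinD

variable {G : Type} [Group G]

def Braids (a b : G) : Prop := a * b * a = b * a * b

lemma Braids.inv {a b : G} (h : Braids a b) : Braids a⁻¹ b⁻¹ := by
  simpa only [Braids, mul_inv_rev, mul_assoc] using congrArg (·⁻¹) h

lemma Braids.semiconjBy_fork {s u v : G} (hsu : Braids s u) (hsv : Braids s v)
    (huv : Commute u v) : SemiconjBy (s * u * v * s) u v :=
  calc s * u * v * s * u = s * (u * v) * (s * u) := by group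
    _ = s * (v * u) * (s * u) := by rw [huv.eq]
    _ = s * v * (u * s * u) := by group
    _ = s * v * (s * u * s) := by rw [hsu]
    _ = (s * v * s) * (u * s) := by group
    _ = (v * s * v) * (u * s) := by rw [hsv]
    _ = v * s * (v * u) * s := by group
    _ = v * s * (u * v) * s := by rw [huv.eq]
    _ = v * (s * u * v * s) := by group

lemma semiconjBy_mul_fork_mul {a b s u v : G} (hsu : Braids s u) (hsv : Braids s v)
    (huv : Commute u v) (hav : Commute a v) (hbu : Commute b u) :
    SemiconjBy (a * (s * u * v * s) * b) u v :=
  (SemiconjBy.mul_left hav (hsu.semiconjBy_fork hsv huv)).mul_left hbu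

lemma Braids.commute_fork {x u v : G} (hxu : Braids x u) (hxv : Braids x v)
    (huv : Commute u v) : Commute (u * v) (x * (u * v) * x) := by
  have hvu : x * v * u * x = x * u * v * x := by simp only [mul_assoc, huv.eq]
  have h := (hxu.semiconjBy_fork hxv huv).mul_right (hvu ▸ hxv.semiconjBy_fork hxu huv.symm)
  rw [← huv.eq, mul_assoc x u v] at h
  exact Commute.symm h

lemma commute_conj_of_braids {x y r : G} (hxy : Braids x y) (hxr : Commute x r)
    (h : Commute (y * r * y) r) : Commute (x * (y * r * y) * x) (y * r * y) :=
  calc x * (y * r * y) * x * (y * r * y) = x * y * r * (y * x * y) * r * y := by group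
    _ = x * y * r * (x * y * x) * r * y := by rw [hxy]
    _ = x * y * (r * x) * y * (x * r) * y := by group
    _ = x * y * (x * r) * y * (r * x) * y := by rw [hxr.eq]
    _ = (x * y * x) * (r * y * r) * (x * y) := by group
    _ = (y * x * y) * (r * y * r) * (x * y) := by rw [hxy]
    _ = y * x * ((y * r * y) * r) * x * y := by group
    _ = y * x * (r * (y * r * y)) * x * y := by rw [h.eq]
    _ = y * x * r * y * r * (y * x * y) := by group
    _ = y * x * r * y * r * (x * y * x) := by rw [hxy]
    _ = y * (x * r) * y * (r * x) * y * x := by group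
    _ = y * (r * x) * y * (x * r) * y * x := by rw [hxr.eq]
    _ = y * r * (x * y * x) * r * y * x := by group
    _ = y * r * (y * x * y) * r * y * x := by rw [hxy]
    _ = (y * r * y) * (x * (y * r * y) * x) := by group

def prodAsc (t : ℕ → G) (a m : ℕ) : G := ((List.range m).map fun j => t (a + j)).prod

def prodDesc (t : ℕ → G) (b m : ℕ) : G := ((List.range m).map fun j => t (b - j)).prod

variable {t s : ℕ → G}

lemma prodAsc_succ (a m : ℕ) : prodAsc t a (m + 1) = prodAsc t a m * t (a + m) := by
  simp [prodAsc, List.range_succ]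

lemma prodAsc_succ' (a m : ℕ) : prodAsc t a (m + 1) = t a * prodAsc t (a + 1) m := by
  rw [prodAsc, List.range_succ_eq_map, List.map_cons, List.prod_cons, List.map_map]
  exact congrArg _ (congrArg _ (List.map_congr_left fun j _ => congrArg t (by omega)))

lemma prodDesc_succ (b m : ℕ) : prodDesc t b (m + 1) = prodDesc t b m * t (b - m) := by
  simp [prodDesc, List.range_succ]

lemma prodDesc_succ' (b m : ℕ) : prodDesc t b (m + 1) = t b * prodDesc t (b - 1) m := by
  rw [prodDesc, List.range_succ_eq_map, List.map_cons, List.prod_cons, List.map_map]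
  exact congrArg _ (congrArg _ (List.map_congr_left fun j _ => congrArg t (by omega)))

lemma prodAsc_congr {a b m : ℕ} (h : ∀ j < m, t (a + j) = s (b + j)) :
    prodAsc t a m = prodAsc s b m :=
  congrArg List.prod (List.map_congr_left fun j hj => h j (List.mem_range.mp hj))

lemma prodDesc_congr {a b m : ℕ} (h : ∀ j < m, t (a - j) = s (b - j)) :
    prodDesc t a m = prodDesc s b m :=
  congrArg List.prod (List.map_congr_left fun j hj => h j (List.mem_range.mp hj))

lemma prodAsc_eq_pow {a m : ℕ} {g : G} (h : ∀ j < m, t (a + j) = g) :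
    prodAsc t a m = g ^ m := by
  rw [prodAsc, List.prod_eq_pow_card _ g (by simpa using h), List.length_map, List.length_range]

lemma prodDesc_eq_pow {b m : ℕ} {g : G} (h : ∀ j < m, t (b - j) = g) :
    prodDesc t b m = g ^ m := by
  rw [prodDesc, List.prod_eq_pow_card _ g (by simpa using h), List.length_map, List.length_range]

lemma commute_prodAsc {x : G} {a m : ℕ} (h : ∀ j < m, Commute x (t (a + j))) :
    Commute x (prodAsc t a m) :=
  Commute.list_prod_right _ _ <| by simpa using h

lemma commute_prodDesc {x : G} {b m : ℕ} (h : ∀ j < m, Commute x (t (b - j))) :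
    Commute x (prodDesc t b m) :=
  Commute.list_prod_right _ _ <| by simpa using h

lemma inv_prodAsc_zero (m : ℕ) :
    (prodAsc t 0 (m + 1))⁻¹ = prodDesc (fun i => (t i)⁻¹) m (m + 1) := by
  induction m with
  | zero => simp [prodAsc, prodDesc]
  | succ m ih =>
    rw [prodAsc_succ, mul_inv_rev, ih, prodDesc_succ' (m + 1), Nat.add_sub_cancel, Nat.zero_add]

lemma Braids.semiconjBy {a b : G} (h : Braids a b) : SemiconjBy (b * a) b a := by
  simpa only [SemiconjBy, mul_assoc] using h.symm

lemma semiconjBy_prodDesc {m : ℕ} (hb : ∀ i < m, Braids (t i) (t (i + 1)))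
    (hc : ∀ i j, i + 2 ≤ j → j ≤ m → Commute (t i) (t j)) {i : ℕ} (hi : i < m) :
    SemiconjBy (prodDesc t m (m + 1)) (t (i + 1)) (t i) := by
  induction m generalizing i with
  | zero => omega
  | succ m ih =>
    rw [prodDesc_succ', Nat.add_sub_cancel]
    rcases Nat.lt_succ_iff_lt_or_eq.mp hi with hi | rfl
    · exact SemiconjBy.mul_left (hc i (m + 1) (by omega) le_rfl).symm
        (ih (fun j hj => hb j (by omega)) (fun j k hjk hk => hc j k hjk (by omega)) hi)
    · have hE : Commute (prodDesc t (i - 1) i) (t (i + 1)) :=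
        (commute_prodDesc fun j hj => (hc (i - 1 - j) (i + 1) (by omega) le_rfl).symm).symm
      rw [prodDesc_succ', ← mul_assoc]
      exact (hb i (by omega)).semiconjBy.mul_left hE

lemma semiconjBy_prodAsc {m : ℕ} (hb : ∀ i < m, Braids (t i) (t (i + 1)))
    (hc : ∀ i j, i + 2 ≤ j → j ≤ m → Commute (t i) (t j)) {i : ℕ} (hi : i < m) :
    SemiconjBy (prodAsc t 0 (m + 1)) (t i) (t (i + 1)) := by
  have h := semiconjBy_prodDesc (t := fun i => (t i)⁻¹) (fun j hj => (hb j hj).inv)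
    (fun j k hjk hk => (hc j k hjk hk).inv_inv) hi
  rwa [← inv_prodAsc_zero, SemiconjBy.inv_inv_symm_iff] at h

lemma factorD_eq (n k : ℕ) (t : ℕ → G) :
    factorD n t k =
      prodAsc t k (n - 2 - k) * t (n - 2) * t (n - 1) * prodDesc t (n - 3) (n - 2 - k) :=
  rfl

lemma factorD_eq_fork (m : ℕ) (t : ℕ → G) :
    factorD (m + 3) t 0 =
      prodAsc t 0 m * (t m * t (m + 1) * t (m + 2) * t m) * prodDesc t (m - 1) m := by
  rw [factorD_eq, show m + 3 - 2 - 0 = m + 1 by omega, prodAsc_succ, prodDesc_succ']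
  simp only [Nat.zero_add, show m + 3 - 2 = m + 1 by omega, show m + 3 - 1 = m + 2 by omega,
    show m + 3 - 3 = m by omega]
  group

/-- The relations of `A[D_n]` on `t 0, …, t (n-1)`: the chain `0 — 1 — ⋯ — (n-2)` with `n-1`
attached to `n-3`. Unlike `adjD`, whose truncated subtraction adds an edge for `n = 2`, this is
also the right diagram `A₁ × A₁` for `n = 2`, where the induction on `n` starts. -/
structure IsDFamily (n : ℕ) (t : ℕ → G) : Prop where
  braids_succ : ∀ i, i + 3 ≤ n → Braids (t i) (t (i + 1))
  braids_fork : ∀ i, i + 3 = n → Braids (t i) (t (n - 1))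
  commute_chain : ∀ i j, i + 2 ≤ j → j + 2 ≤ n → Commute (t i) (t j)
  commute_fork : ∀ i, i + 2 ≤ n → i + 3 ≠ n → Commute (t i) (t (n - 1))

namespace IsDFamily

variable {n : ℕ}

lemma shift (h : IsDFamily (n + 1) t) : IsDFamily n (fun i => t (i + 1)) where
  braids_succ i hi := h.braids_succ (i + 1) (by omega)
  braids_fork i hi := by
    simpa [show n - 1 + 1 = n by omega] using h.braids_fork (i + 1) (by omega)
  commute_chain i j hij hj := h.commute_chain (i + 1) (j + 1) (by omega) (by omega)
  commute_fork i hi hi' := by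
    simpa [show n - 1 + 1 = n by omega] using h.commute_fork (i + 1) (by omega) (by omega)

lemma commute_zero (h : IsDFamily n t) (hn : 4 ≤ n) {j : ℕ} (hj : 2 ≤ j) (hjn : j < n) :
    Commute (t 0) (t j) := by
  by_cases hj' : j = n - 1
  · rw [hj']
    exact h.commute_fork 0 (by omega) (by omega)
  · exact h.commute_chain 0 j hj (by omega)

lemma semiconjBy_factorD_fork {m : ℕ} (h : IsDFamily (m + 3) t) :
    SemiconjBy (factorD (m + 3) t 0) (t (m + 1)) (t (m + 2)) ∧
      SemiconjBy (factorD (m + 3) t 0) (t (m + 2)) (t (m + 1)) := by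
  have hsu : Braids (t m) (t (m + 1)) := h.braids_succ m le_rfl
  have hsv : Braids (t m) (t (m + 2)) := h.braids_fork m rfl
  have huv : Commute (t (m + 1)) (t (m + 2)) := h.commute_fork (m + 1) (by omega) (by omega)
  have hA : ∀ k, m + 1 ≤ k → k ≤ m + 2 → Commute (prodAsc t 0 m) (t k) := fun k hk hk' =>
    (commute_prodAsc fun j hj => by
      rcases (show k = m + 1 ∨ k = m + 2 by omega) with rfl | rfl
      · exact (h.commute_chain (0 + j) (m + 1) (by omega) (by omega)).symm
      · exact (h.commute_fork (0 + j) (by omega) (by omega)).symm).symm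
  have hB : ∀ k, m + 1 ≤ k → k ≤ m + 2 → Commute (prodDesc t (m - 1) m) (t k) :=
    fun k hk hk' =>
    (commute_prodDesc fun j hj => by
      rcases (show k = m + 1 ∨ k = m + 2 by omega) with rfl | rfl
      · exact (h.commute_chain (m - 1 - j) (m + 1) (by omega) (by omega)).symm
      · exact (h.commute_fork (m - 1 - j) (by omega) (by omega)).symm).symm
  rw [factorD_eq_fork]
  refine ⟨semiconjBy_mul_fork_mul hsu hsv huv (hA _ (by omega) le_rfl) (hB _ le_rfl (by omega)),
    ?_⟩
  rw [show t m * t (m + 1) * t (m + 2) * t m = t m * t (m + 2) * t (m + 1) * t m by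
    simp only [mul_assoc, huv.eq]]
  exact semiconjBy_mul_fork_mul hsv hsu huv.symm (hA _ le_rfl (by omega)) (hB _ (by omega) le_rfl)

lemma commute_factorD_inner (h : IsDFamily n t) {i : ℕ} (hi : i + 4 ≤ n) :
    Commute (factorD n t 0) (t (i + 1)) := by
  obtain ⟨m, rfl⟩ : ∃ m, n = m + 3 := ⟨n - 3, by omega⟩
  have hb : ∀ j < m, Braids (t j) (t (j + 1)) := fun j hj => h.braids_succ j (by omega)
  have hc : ∀ j k, j + 2 ≤ k → k ≤ m → Commute (t j) (t k) := fun j k hjk hk =>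
    h.commute_chain j k hjk (by omega)
  have hu : Commute (t (m + 1)) (t i) := (h.commute_chain i (m + 1) (by omega) (by omega)).symm
  have hv : Commute (t (m + 2)) (t i) := (h.commute_fork i (by omega) (by omega)).symm
  rw [factorD_eq, show m + 3 - 2 - 0 = m + 1 by omega]
  exact (((semiconjBy_prodAsc hb hc (by omega)).mul_left hu).mul_left hv).mul_left
    (semiconjBy_prodDesc hb hc (by omega))

lemma semiconjBy_factorD (h : IsDFamily n t) (hn : 3 ≤ n) {i : ℕ} (hi : 1 ≤ i)
    (hin : i < n) : SemiconjBy (factorD n t 0) (t i) (t (Equiv.swap (n - 2) (n - 1) i)) := by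
  obtain ⟨m, rfl⟩ : ∃ m, n = m + 3 := ⟨n - 3, by omega⟩
  simp only [show m + 3 - 2 = m + 1 by omega, show m + 3 - 1 = m + 2 by omega]
  rcases (show i ≤ m ∨ i = m + 1 ∨ i = m + 2 by omega) with hi' | rfl | rfl
  · obtain ⟨j, rfl⟩ : ∃ j, i = j + 1 := ⟨i - 1, by omega⟩
    rw [Equiv.swap_apply_of_ne_of_ne (by omega) (by omega)]
    exact h.commute_factorD_inner (by omega)
  · rw [Equiv.swap_apply_left]
    exact h.semiconjBy_factorD_fork.1
  · rw [Equiv.swap_apply_right]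
    exact h.semiconjBy_factorD_fork.2

end IsDFamily

lemma factorD_succ_succ {n k : ℕ} (hk : k + 1 < n) :
    factorD (n + 1) t (k + 1) = factorD n (fun i => t (i + 1)) k := by
  obtain ⟨m, rfl⟩ : ∃ m, n = m + 2 := ⟨n - 2, by omega⟩
  rw [factorD_eq, factorD_eq, show m + 2 + 1 - 2 - (k + 1) = m + 2 - 2 - k by omega,
    prodAsc_congr (s := fun i => t (i + 1)) (b := k) fun j _ => congrArg t (by omega),
    prodDesc_congr (s := fun i => t (i + 1)) (b := m + 2 - 3) fun j hj => congrArg t (by omega)]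
  rfl

lemma factorD_zero_succ {n : ℕ} (hn : 2 ≤ n) :
    factorD (n + 1) t 0 = t 0 * factorD n (fun i => t (i + 1)) 0 * t 0 := by
  obtain ⟨m, rfl⟩ : ∃ m, n = m + 2 := ⟨n - 2, by omega⟩
  have hA : prodAsc t 0 (m + 1) = t 0 * prodAsc (fun i => t (i + 1)) 0 m := by
    rw [prodAsc_succ']
    exact congrArg _ (prodAsc_congr fun j _ => congrArg t (by omega))
  have hD : prodDesc t m (m + 1) = prodDesc (fun i => t (i + 1)) (m - 1) m * t 0 := by
    rw [prodDesc_succ, Nat.sub_self]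
    exact congrArg (· * t 0) (prodDesc_congr fun j hj => congrArg t (by omega))
  change prodAsc t 0 (m + 1) * t (m + 1) * t (m + 2) * prodDesc t m (m + 1) =
    t 0 * (prodAsc (fun i => t (i + 1)) 0 m * t (m + 1) * t (m + 2) *
      prodDesc (fun i => t (i + 1)) (m - 1) m) * t 0
  rw [hA, hD]
  group

lemma deltaDin_succ {n : ℕ} (hn : 1 ≤ n) :
    deltaDin (n + 1) t = factorD (n + 1) t 0 * deltaDin n (fun i => t (i + 1)) := by
  obtain ⟨m, rfl⟩ : ∃ m, n = m + 1 := ⟨n - 1, by omega⟩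
  rw [deltaDin, deltaDin, Nat.add_sub_cancel, Nat.add_sub_cancel, List.range_succ_eq_map,
    List.map_cons, List.prod_cons, List.map_map]
  exact congrArg _ (congrArg _ (List.map_congr_left fun k hk =>
    factorD_succ_succ (by simp only [List.mem_range] at hk; omega)))

lemma deltaDin_of_le_one {n : ℕ} (hn : n ≤ 1) : deltaDin n t = 1 := by
  simp [deltaDin, Nat.sub_eq_zero_of_le hn]

lemma commute_factorD {n : ℕ} {x : G} (h : ∀ j < n, Commute x (t j)) (hn : 1 ≤ n) (k : ℕ) :
    Commute x (factorD n t k) :=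
  (((commute_prodAsc fun j hj => h _ (by omega)).mul_right (h _ (by omega))).mul_right
    (h _ (by omega))).mul_right (commute_prodDesc fun j hj => h _ (by omega))

lemma commute_deltaDin {n : ℕ} {x : G} (h : ∀ j < n, Commute x (t j)) :
    Commute x (deltaDin n t) := by
  rcases Nat.lt_or_ge n 2 with hn | hn
  · rw [deltaDin_of_le_one (by omega)]
    exact Commute.one_right x
  · exact Commute.list_prod_right _ _ fun y hy => by
      obtain ⟨k, -, rfl⟩ := List.mem_map.mp hy
      exact commute_factorD h (by omega) k

lemma IsDFamily.commute_factorD_succ {n : ℕ} (h : IsDFamily (n + 1) t) (hn : 2 ≤ n) :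
    Commute (factorD (n + 1) t 0) (factorD n (fun i => t (i + 1)) 0) := by
  induction n, hn using Nat.le_induction generalizing t with
  | base =>
    have hF : factorD 2 (fun i => t (i + 1)) 0 = t 1 * t 2 := by
      simp [factorD_eq, prodAsc, prodDesc]
    rw [factorD_zero_succ le_rfl, hF]
    exact ((h.braids_succ 0 le_rfl).commute_fork (h.braids_fork 0 rfl)
      (h.commute_fork 1 (by omega) (by omega))).symm
  | succ n hn ih =>
    have hR := ih h.shift
    rw [factorD_zero_succ hn] at hR
    rw [factorD_zero_succ (by omega), factorD_zero_succ (t := fun i => t (i + 1)) hn]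
    refine commute_conj_of_braids (h.braids_succ 0 (by omega)) ?_ hR
    exact commute_factorD (fun j hj => h.commute_zero (by omega) (by omega) (by omega))
      (by omega) 0

lemma IsDFamily.commute_deltaDin_zero {n : ℕ} (h : IsDFamily n t) (hn : 3 ≤ n) :
    Commute (deltaDin n t) (t 0) := by
  obtain ⟨m, rfl⟩ : ∃ m, n = m + 3 := ⟨n - 3, by omega⟩
  have hF : factorD (m + 3) t 0 = t 0 * factorD (m + 2) (fun i => t (i + 1)) 0 * t 0 :=
    factorD_zero_succ (by omega)
  have hFF := h.commute_factorD_succ (by omega)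
  have hD : Commute (deltaDin (m + 1) fun i => t (i + 1 + 1)) (t 0) := by
    rcases Nat.eq_zero_or_pos m with rfl | hm
    · rw [deltaDin_of_le_one le_rfl]
      exact Commute.one_left _
    · exact (commute_deltaDin fun j hj => h.commute_zero (by omega) (by omega) (by omega)).symm
  rw [deltaDin_succ (by omega), deltaDin_succ (by omega), ← mul_assoc]
  refine Commute.mul_left ?_ hD
  rw [hF] at hFF ⊢
  set F := factorD (m + 2) (fun i => t (i + 1)) 0
  calc t 0 * F * t 0 * F * t 0 = t 0 * (F * (t 0 * F * t 0)) := by group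
    _ = t 0 * (t 0 * F * t 0 * F) := by rw [← hFF.eq]

def deltaPerm (n : ℕ) : Equiv.Perm ℕ := if Odd n then Equiv.swap (n - 2) (n - 1) else 1

lemma deltaPerm_lt {n i : ℕ} (hi : i < n) : deltaPerm n i < n := by
  unfold deltaPerm
  split_ifs
  · rw [Equiv.swap_apply_def]
    split_ifs <;> omega
  · exact hi

lemma deltaPerm_deltaPerm (n i : ℕ) : deltaPerm n (deltaPerm n i) = i := by
  unfold deltaPerm
  split_ifs <;> simp

lemma deltaPerm_zero {n : ℕ} (hn : 3 ≤ n) : deltaPerm n 0 = 0 := by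
  unfold deltaPerm
  split_ifs
  · exact Equiv.swap_apply_of_ne_of_ne (by omega) (by omega)
  · rfl

lemma deltaPerm_succ_succ {n i : ℕ} (hn : 2 ≤ n) :
    deltaPerm (n + 1) (i + 1) = Equiv.swap (n + 1 - 2) (n + 1 - 1) (deltaPerm n i + 1) := by
  rcases Nat.even_or_odd n with hn' | hn'
  · simp only [deltaPerm, Nat.not_odd_iff_even.mpr hn', hn'.add_one, if_true, if_false,
      Equiv.Perm.coe_one, id]
  · simp only [deltaPerm, hn', Nat.not_odd_iff_even.mpr hn'.add_one, if_true, if_false,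
      Equiv.Perm.coe_one, id, Equiv.swap_apply_def]
    split_ifs <;> omega

theorem IsDFamily.semiconjBy_deltaDin {n : ℕ} (h : IsDFamily n t) (hn : 2 ≤ n) {i : ℕ}
    (hi : i < n) : SemiconjBy (deltaDin n t) (t i) (t (deltaPerm n i)) := by
  induction n, hn using Nat.le_induction generalizing t i with
  | base =>
    have huv : Commute (t 0) (t 1) := h.commute_fork 0 le_rfl (by omega)
    have hΔ : deltaDin 2 t = t 0 * t 1 := by simp [deltaDin, factorD_eq, prodAsc, prodDesc]
    rw [hΔ, show deltaPerm 2 i = i by simp [deltaPerm, show ¬ Odd 2 by decide]]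
    interval_cases i
    · exact (Commute.refl _).mul_left huv.symm
    · exact huv.mul_left (Commute.refl _)
  | succ n hn ih =>
    rcases i with _ | i
    · rw [deltaPerm_zero (by omega)]
      exact h.commute_deltaDin_zero (by omega)
    · have hσ := deltaPerm_lt (show i < n by omega)
      rw [deltaDin_succ (by omega), deltaPerm_succ_succ hn]
      exact (h.semiconjBy_factorD (by omega) (by omega) (by omega)).mul_left
        (ih h.shift (by omega))

lemma map_factorD {H : Type} [Group H] (f : G →* H) (n k : ℕ) :
    f (factorD n t k) = factorD n (fun i => f (t i)) k := by
  simp only [factorD, map_list_prod, map_mul, List.map_map, Function.comp_def]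

lemma map_deltaDin {H : Type} [Group H] (f : G →* H) (n : ℕ) :
    f (deltaDin n t) = deltaDin n (fun i => f (t i)) := by
  simp only [deltaDin, map_list_prod, List.map_map, Function.comp_def, map_factorD]

lemma factorD_eq_pow {n : ℕ} {g : G} (h : ∀ j < n, t j = g) (hn : 2 ≤ n) :
    factorD n t 0 = g ^ (2 * (n - 1)) := by
  rw [factorD_eq, prodAsc_eq_pow fun j hj => h _ (by omega),
    prodDesc_eq_pow fun j hj => h _ (by omega), h _ (by omega), h _ (by omega), ← pow_succ,
    ← pow_succ, ← pow_add]
  congr 1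
  omega

lemma deltaDin_eq_pow {n : ℕ} {g : G} (h : ∀ j < n, t j = g) :
    deltaDin n t = g ^ (n * (n - 1)) := by
  induction n generalizing t with
  | zero => simp [deltaDin]
  | succ n ih =>
    rcases Nat.eq_zero_or_pos n with rfl | hn
    · simp [deltaDin]
    · rw [deltaDin_succ hn, factorD_eq_pow h (by omega), ih fun j hj => h _ (by omega),
        ← pow_add]
      congr 1
      obtain ⟨m, rfl⟩ : ∃ m, n = m + 1 := ⟨n - 1, by omega⟩
      simp only [Nat.add_sub_cancel]
      ring

lemma braids_gD {n i j : ℕ} (hij : i < j) (hj : j < n) (h : adjD n i j) :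
    Braids (gD n i) (gD n j) := by
  have hi : i < n := hij.trans hj
  have := PresentedGroup.mk_eq_mk_of_mul_inv_mem (rels := ArelD n)
    (x := .of ⟨i, hi⟩ * .of ⟨j, hj⟩ * .of ⟨i, hi⟩)
    (y := .of ⟨j, hj⟩ * .of ⟨i, hi⟩ * .of ⟨j, hj⟩)
    ⟨⟨i, hi⟩, ⟨j, hj⟩, hij, Or.inl ⟨h, rfl⟩⟩
  simp only [map_mul] at this
  simp only [Braids, gD, dif_pos hi, dif_pos hj]
  exact this

lemma commute_gD {n i j : ℕ} (hij : i < j) (hj : j < n) (h : ¬ adjD n i j) :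
    Commute (gD n i) (gD n j) := by
  have hi : i < n := hij.trans hj
  have := PresentedGroup.mk_eq_mk_of_mul_inv_mem (rels := ArelD n)
    (x := .of ⟨i, hi⟩ * .of ⟨j, hj⟩) (y := .of ⟨j, hj⟩ * .of ⟨i, hi⟩)
    ⟨⟨i, hi⟩, ⟨j, hj⟩, hij, Or.inr ⟨h, rfl⟩⟩
  simp only [map_mul] at this
  simp only [Commute, SemiconjBy, gD, dif_pos hi, dif_pos hj]
  exact this

lemma isDFamily_gD {n : ℕ} (hn : 3 ≤ n) : IsDFamily n (gD n) where
  braids_succ i hi := braids_gD (by omega) (by omega) (Or.inl ⟨rfl, by omega⟩)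
  braids_fork i hi := braids_gD (by omega) (by omega) (Or.inr ⟨by omega, rfl⟩)
  commute_chain i j hij hj := commute_gD (by omega) (by omega) (by unfold adjD; omega)
  commute_fork i hi hi' := commute_gD (by omega) (by omega) (by unfold adjD; omega)

lemma mem_center_of_commute_gD {n : ℕ} {z : ArtinD n} (h : ∀ i < n, Commute z (gD n i)) :
    z ∈ Subgroup.center (ArtinD n) := by
  rw [← Subgroup.centralizer_univ, ← Subgroup.coe_top, ← PresentedGroup.closure_range_of,
    Subgroup.centralizer_closure, Subgroup.mem_centralizer_iff]
  rintro _ ⟨i, rfl⟩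
  simpa [gD] using (h i i.2).symm.eq

theorem deltaD_zpow_kap_mem_center {n : ℕ} (hn : 3 ≤ n) :
    deltaD n ^ kap n ∈ Subgroup.center (ArtinD n) := by
  have hΔ := fun j (hj : j < n) => (isDFamily_gD hn).semiconjBy_deltaDin (by omega) hj
  refine mem_center_of_commute_gD fun i hi => ?_
  rw [deltaD]
  rcases Nat.even_or_odd n with he | ho
  · rw [kap, if_neg (Nat.not_odd_iff_even.mpr he), zpow_one]
    have h := hΔ i hi
    rwa [deltaPerm, if_neg (Nat.not_odd_iff_even.mpr he), Equiv.Perm.coe_one, id] at h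
  · rw [kap, if_pos ho, zpow_two]
    have h := (hΔ _ (deltaPerm_lt hi)).mul_left (hΔ i hi)
    rwa [deltaPerm_deltaPerm] at h

end ArtinD

/-- For `n ≥ 4`, if `φ_Z` is a cyclic endomorphism of `A_Z[D_n] = A[D_n]/Z(A[D_n])`
with `φ_Z(t_{Z,i}) = g_Z` for all `i`, then `g_Z^{κ n (n-1)} = 1`, where `κ = 2` if `n`
is odd and `κ = 1` if `n` is even. -/
theorem cyclic_endomorphism_finite_order (n : ℕ) (hn : 4 ≤ n)
    (φZ : AZD n →* AZD n) (gZ : AZD n)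
    (hφ : ∀ i < n, φZ (QuotientGroup.mk' (Subgroup.center (ArtinD n)) (gD n i)) = gZ) :
    gZ ^ (kap n * ((n * (n - 1) : ℕ) : ℤ)) = 1 := by
  let ψ := φZ.comp (QuotientGroup.mk' (Subgroup.center (ArtinD n)))
  have hΔ : ψ (deltaD n) = gZ ^ (n * (n - 1)) := by
    rw [deltaD, ArtinD.map_deltaDin]
    exact ArtinD.deltaDin_eq_pow hφ
  have hker : ψ (deltaD n ^ kap n) = 1 := by
    rw [MonoidHom.comp_apply, QuotientGroup.mk'_apply, (QuotientGroup.eq_one_iff _).mpr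
      (ArtinD.deltaD_zpow_kap_mem_center (n := n) (by omega)), map_one]
  rw [mul_comm, zpow_mul, zpow_natCast, ← hΔ, ← map_zpow, hker]
end

section
/- Let Σ be a compact oriented surface of genus ≥ 2 with a finite set P of punctures, let f ∈ M(Σ,P) be a mapping class, and let n be a nonzero integer. Then the set of essential reduction classes satisfies S(f^n) = S(f), and for every g ∈ M(Σ,P), S(g f g^{-1}) = g(S(f)). -/
/-!
A finite set invariant under `h` is invariant under every power of `h`, so reduction systems of `f`
are reduction systems of `fᵐ`, and essentialness does not see the exponent since `f` and `fᵐ` fix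
curves for the same nonzero powers. Conversely, an essential class `a` of `fᵐ` lies in a finite
`fᵐ`-invariant set, hence is periodic under `f`, and its finite `f`-orbit is a reduction system for
`f`: two of its curves meeting would, after translating by a power of `f`, make `a` meet a periodic
curve. Conjugation invariance holds because `ι` is `G`-invariant, so `g` transports everything.
-/

open scoped Pointwise

section ReductionSystems

variable {G C : Type} [Group G] [MulAction G C]

/-- A simplex of the curve complex invariant under `h`, with `ι` the geometric intersection
number on the isotopy classes `C`. -/
def IsReductionSystem (ι : C → C → ℕ) (h : G) (A : Finset C) : Prop :=
  (∀ b ∈ A, ∀ c ∈ A, b ≠ c → ι b c = 0) ∧ ∀ b ∈ A, h • b ∈ A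

def IsEssentialClass (ι : C → C → ℕ) (h : G) (a : C) : Prop :=
  ∀ b : C, ι a b ≠ 0 → ∀ m : ℤ, m ≠ 0 → h ^ m • b ≠ b

def essentialReductionClasses (ι : C → C → ℕ) (h : G) : Set C :=
  {a | (∃ A : Finset C, a ∈ A ∧ IsReductionSystem ι h A) ∧ IsEssentialClass ι h a}

variable {ι : C → C → ℕ}

/-- A finite set mapped into itself by `h` is mapped onto itself, so `h` lies in its stabilizer. -/
theorem Finset.zpow_smul_mem_of_forall_smul_mem {A : Finset C} {h : G}
    (hA : ∀ b ∈ A, h • b ∈ A) (k : ℤ) {b : C} (hb : b ∈ A) : h ^ k • b ∈ A := by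
  classical
  have hsub : h • A ⊆ A := by
    intro c hc
    obtain ⟨b, hb, rfl⟩ := Finset.mem_smul_finset.mp hc
    exact hA b hb
  have hstab : h ∈ MulAction.stabilizer G A :=
    Finset.eq_of_subset_of_card_le hsub (Finset.card_smul_finset h A).ge
  have hk : h ^ k • A = A := Subgroup.zpow_mem _ hstab k
  rw [← hk]
  exact Finset.smul_mem_smul_finset hb

theorem Finset.exists_zpow_smul_eq_of_forall_smul_mem {A : Finset C} {h : G}
    (hA : ∀ b ∈ A, h • b ∈ A) {a : C} (ha : a ∈ A) : ∃ N : ℤ, N ≠ 0 ∧ h ^ N • a = a := by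
  obtain ⟨i, j, hij, he⟩ := Finite.exists_ne_map_eq_of_infinite
    (fun k : ℤ => (⟨h ^ k • a, A.zpow_smul_mem_of_forall_smul_mem hA k ha⟩ : A))
  have he : h ^ i • a = h ^ j • a := congrArg Subtype.val he
  refine ⟨-i + j, by omega, ?_⟩
  rw [zpow_add, mul_smul, ← he, smul_smul, ← zpow_add, neg_add_cancel,
    zpow_zero, one_smul]

theorem finite_range_zpow_smul {h : G} {a : C} {N : ℤ} (hN : N ≠ 0) (ha : h ^ N • a = a) :
    (Set.range fun k : ℤ => h ^ k • a).Finite := by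
  set p : ℤ := (MulAction.period h a : ℤ)
  have hp : 0 < p := by
    have hdvd : p ∣ N := MulAction.zpow_smul_eq_iff_period_dvd.mp ha
    have : p ≠ 0 := fun h0 => hN (zero_dvd_iff.mp (h0 ▸ hdvd))
    omega
  refine ((Set.finite_Ico 0 p).image fun k : ℤ => h ^ k • a).subset ?_
  rintro _ ⟨k, rfl⟩
  exact ⟨k % p, ⟨Int.emod_nonneg k hp.ne', Int.emod_lt_of_pos k hp⟩,
    MulAction.zpow_mod_period_smul k⟩

theorem IsReductionSystem.zpow {h : G} {A : Finset C} (hA : IsReductionSystem ι h A) (k : ℤ) :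
    IsReductionSystem ι (h ^ k) A :=
  ⟨hA.1, fun _ hb => A.zpow_smul_mem_of_forall_smul_mem hA.2 k hb⟩

theorem isEssentialClass_zpow_iff {h : G} {a : C} {m : ℤ} (hm : m ≠ 0) :
    IsEssentialClass ι (h ^ m) a ↔ IsEssentialClass ι h a := by
  refine ⟨fun ha b hb k hk hfix => ?_, fun ha b hb k hk => ?_⟩
  · refine ha b hb k hk ?_
    rw [← zpow_mul, mul_comm, zpow_mul]
    exact Subgroup.zpow_mem (MulAction.stabilizer G b) hfix m
  · rw [← zpow_mul]
    exact ha b hb (m * k) (mul_ne_zero hm hk)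

/-- Two curves of the orbit of a periodic essential class cannot intersect: translating by a power
of `h`, an intersection would make `a` meet a curve fixed by `h ^ N`. -/
theorem IsEssentialClass.intersection_zpow_smul_eq_zero
    (hequiv : ∀ (g : G) (a b : C), ι (g • a) (g • b) = ι a b) {h : G} {a : C}
    (ha : IsEssentialClass ι h a) {N : ℤ} (hN : N ≠ 0) (hper : h ^ N • a = a) (i j : ℤ) :
    ι (h ^ i • a) (h ^ j • a) = 0 := by
  by_contra hne
  have hmeet : ι a (h ^ (-i + j) • a) ≠ 0 := by
    rwa [← hequiv (h ^ i), smul_smul, ← zpow_add, add_neg_cancel_left]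
  refine ha _ hmeet N hN ?_
  rw [smul_smul, ← zpow_add, add_comm, zpow_add, mul_smul, hper]

theorem IsEssentialClass.exists_isReductionSystem
    (hequiv : ∀ (g : G) (a b : C), ι (g • a) (g • b) = ι a b) {h : G} {a : C}
    (ha : IsEssentialClass ι h a) {N : ℤ} (hN : N ≠ 0) (hper : h ^ N • a = a) :
    ∃ A : Finset C, a ∈ A ∧ IsReductionSystem ι h A := by
  let O := (finite_range_zpow_smul hN hper).toFinset
  refine ⟨O, ?_, ?_, ?_⟩
  · simpa [O] using ⟨0, by simp⟩
  · simp only [O, Set.Finite.mem_toFinset, Set.mem_range]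
    rintro _ ⟨i, rfl⟩ _ ⟨j, rfl⟩ -
    exact ha.intersection_zpow_smul_eq_zero hequiv hN hper i j
  · simp only [O, Set.Finite.mem_toFinset, Set.mem_range]
    rintro _ ⟨k, rfl⟩
    exact ⟨1 + k, by rw [zpow_one_add, mul_smul]⟩

theorem essentialReductionClasses_zpow
    (hequiv : ∀ (g : G) (a b : C), ι (g • a) (g • b) = ι a b) (h : G) {m : ℤ} (hm : m ≠ 0) :
    essentialReductionClasses ι (h ^ m) = essentialReductionClasses ι h := by
  ext a
  constructor
  · rintro ⟨⟨A, haA, hA⟩, hess⟩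
    rw [isEssentialClass_zpow_iff hm] at hess
    obtain ⟨N, hN, hper⟩ := A.exists_zpow_smul_eq_of_forall_smul_mem hA.2 haA
    rw [← zpow_mul] at hper
    exact ⟨hess.exists_isReductionSystem hequiv (mul_ne_zero hm hN) hper, hess⟩
  · rintro ⟨⟨A, haA, hA⟩, hess⟩
    exact ⟨⟨A, haA, hA.zpow m⟩, (isEssentialClass_zpow_iff hm).mpr hess⟩

theorem IsReductionSystem.conj [DecidableEq C]
    (hequiv : ∀ (g : G) (a b : C), ι (g • a) (g • b) = ι a b) {f : G} {A : Finset C}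
    (hA : IsReductionSystem ι f A) (g : G) : IsReductionSystem ι (g * f * g⁻¹) (g • A) := by
  refine ⟨?_, ?_⟩
  · simp only [Finset.mem_smul_finset]
    rintro _ ⟨b, hb, rfl⟩ _ ⟨c, hc, rfl⟩ hbc
    rw [hequiv]
    exact hA.1 b hb c hc (ne_of_apply_ne _ hbc)
  · simp only [Finset.mem_smul_finset]
    rintro _ ⟨b, hb, rfl⟩
    exact ⟨f • b, hA.2 b hb, by rw [smul_smul, smul_smul, inv_mul_cancel_right, mul_smul]⟩

theorem IsEssentialClass.conj
    (hequiv : ∀ (g : G) (a b : C), ι (g • a) (g • b) = ι a b) {f : G} {a : C}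
    (ha : IsEssentialClass ι f a) (g : G) : IsEssentialClass ι (g * f * g⁻¹) (g • a) := by
  intro b hb k hk hfix
  rw [← smul_inv_smul g b, hequiv] at hb
  rw [conj_zpow, mul_smul, mul_smul, smul_eq_iff_eq_inv_smul] at hfix
  exact ha _ hb k hk hfix

theorem smul_essentialReductionClasses_subset
    (hequiv : ∀ (g : G) (a b : C), ι (g • a) (g • b) = ι a b) (f g : G) :
    g • essentialReductionClasses ι f ⊆ essentialReductionClasses ι (g * f * g⁻¹) := by
  classical
  rintro _ ⟨a, ⟨⟨A, haA, hA⟩, hess⟩, rfl⟩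
  exact ⟨⟨g • A, Finset.smul_mem_smul_finset haA, hA.conj hequiv g⟩, hess.conj hequiv g⟩

theorem essentialReductionClasses_conj
    (hequiv : ∀ (g : G) (a b : C), ι (g • a) (g • b) = ι a b) (f g : G) :
    essentialReductionClasses ι (g * f * g⁻¹) = g • essentialReductionClasses ι f := by
  refine subset_antisymm ?_ (smul_essentialReductionClasses_subset hequiv f g)
  rw [Set.subset_smul_set_iff]
  simpa [mul_assoc] using smul_essentialReductionClasses_subset hequiv (g * f * g⁻¹) g⁻¹

end ReductionSystems

theorem essential_reduction_system_power_conj_general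
    {G C : Type} [Group G] [MulAction G C]
    (ι : C → C → ℕ)
    (hequiv : ∀ (g : G) (a b : C), ι (g • a) (g • b) = ι a b)
    (S : G → Set C)
    (hS : ∀ (h : G), S h = {a : C |
      (∃ A : Finset C, a ∈ A ∧ (∀ b ∈ A, ∀ c ∈ A, b ≠ c → ι b c = 0) ∧
        ∀ b ∈ A, h • b ∈ A) ∧
      (∀ b : C, ι a b ≠ 0 → ∀ m : ℤ, m ≠ 0 → h ^ m • b ≠ b)})
    (f : G) (m : ℤ) (hm : m ≠ 0) (g : G) :
    S (f ^ m) = S f ∧ S (g * f * g⁻¹) = (fun b => g • b) '' S f := by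
  have hS' : ∀ h, S h = essentialReductionClasses ι h := hS
  rw [hS', hS', hS']
  exact ⟨essentialReductionClasses_zpow hequiv f hm, essentialReductionClasses_conj hequiv f g⟩

/-- The set of essential reduction classes of a mapping class `f` of a mapping class group,
acting on the set of isotopy classes of generic circles with geometric intersection number `ι`
(Birman–Lubotzky–McCarthy): `S(fⁿ) = S(f)` for every nonzero integer `n`, and
`S(g f g⁻¹) = g(S(f))` for every mapping class `g`. Here a class `a` is an essential reduction
class for `h` if it belongs to some reduction system for `h` (a simplex of the curve complex,
i.e. a finite set of classes with pairwise intersection number `0`, invariant under `h`) and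
for every class `b` with `ι a b ≠ 0` and every `m ∈ ℤ ∖ {0}` one has `hᵐ(b) ≠ b`. -/
theorem essential_reduction_system_power_conj
    {G C : Type} [Group G] [MulAction G C]
    (ι : C → C → ℕ) (hsymm : ∀ a b : C, ι a b = ι b a)
    (hequiv : ∀ (g : G) (a b : C), ι (g • a) (g • b) = ι a b)
    (S : G → Set C)
    (hS : ∀ (h : G), S h = {a : C |
      (∃ A : Finset C, a ∈ A ∧ (∀ b ∈ A, ∀ c ∈ A, b ≠ c → ι b c = 0) ∧
        ∀ b ∈ A, h • b ∈ A) ∧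
      (∀ b : C, ι a b ≠ 0 → ∀ m : ℤ, m ≠ 0 → h ^ m • b ≠ b)})
    (f : G) (m : ℤ) (hm : m ≠ 0) (g : G) :
    S (f ^ m) = S f ∧ S (g * f * g⁻¹) = (fun b => g • b) '' S f :=
  essential_reduction_system_power_conj_general ι hequiv S hS f m hm g
end

section
/- Let n ≥ 6. If φ : A[D_n] → A[D_n] is an injective endomorphism, then φ(t_{n-1}) ≠ φ(t_n); consequently, given the classification of endomorphisms of A[D_n] into (1) cyclic, (2) conjugates of ψ∘β_{p,q}∘π with ψ ∈ ⟨ζ,χ⟩, and (3) conjugates of ψ∘γ_p with ψ ∈ ⟨ζ,χ⟩, every injective endomorphism is of type (3). -/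
/-- A homomorphism `ψ : A[D_n] → A[D_n]` acts like an element of `⟨ζ, χ⟩` on the generators:
for some sign `ε ∈ {±1}`, `ψ(t_i) = t_i^ε` for `i ≤ n-2` and `ψ` either fixes or swaps
`t_{n-1}^ε, t_n^ε`. -/
def DiagLike (n : ℕ) (ψ : MulAut (ArtinD n)) : Prop :=
  ∃ ε : ℤ, (ε = 1 ∨ ε = -1) ∧
    (∀ i < n - 2, ψ (gD n i) = (gD n i) ^ ε) ∧
    ((ψ (gD n (n - 2)) = (gD n (n - 2)) ^ ε ∧ ψ (gD n (n - 1)) = (gD n (n - 1)) ^ ε) ∨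
     (ψ (gD n (n - 2)) = (gD n (n - 1)) ^ ε ∧ ψ (gD n (n - 1)) = (gD n (n - 2)) ^ ε))


section InjEndoAux

/-- Sign-preserving swap of levels `a` and `b` in `ℕ × Bool`. -/
def dswapX (a b : ℕ) : Equiv.Perm (ℕ × Bool) where
  toFun p := if p.1 = a then (b, p.2) else if p.1 = b then (a, p.2) else p
  invFun p := if p.1 = a then (b, p.2) else if p.1 = b then (a, p.2) else p
  left_inv p := by obtain ⟨m, x⟩ := p; dsimp only; split_ifs <;> simp_all
  right_inv p := by obtain ⟨m, x⟩ := p; dsimp only; split_ifs <;> simp_all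

/-- Sign-flipping swap of levels `a` and `b` in `ℕ × Bool`. -/
def fswapX (a b : ℕ) : Equiv.Perm (ℕ × Bool) where
  toFun p := if p.1 = a then (b, !p.2) else if p.1 = b then (a, !p.2) else p
  invFun p := if p.1 = a then (b, !p.2) else if p.1 = b then (a, !p.2) else p
  left_inv p := by obtain ⟨m, x⟩ := p; dsimp only; split_ifs <;> simp_all
  right_inv p := by obtain ⟨m, x⟩ := p; dsimp only; split_ifs <;> simp_all

lemma braid_ddX (a b c : ℕ) (hab : a ≠ b) (hbc : b ≠ c) (hac : a ≠ c) :
    dswapX a b * dswapX b c * dswapX a b = dswapX b c * dswapX a b * dswapX b c := by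
  ext ⟨m, x⟩ <;>
  · rcases eq_or_ne m a with h1 | h1 <;> rcases eq_or_ne m b with h2 | h2 <;>
      rcases eq_or_ne m c with h3 | h3 <;>
    simp_all [dswapX, Equiv.Perm.mul_apply, hab.symm, hbc.symm, hac.symm]

lemma braid_dfX (a b c : ℕ) (hab : a ≠ b) (hbc : b ≠ c) (hac : a ≠ c) :
    dswapX a b * fswapX b c * dswapX a b = fswapX b c * dswapX a b * fswapX b c := by
  ext ⟨m, x⟩ <;>
  · rcases eq_or_ne m a with h1 | h1 <;> rcases eq_or_ne m b with h2 | h2 <;>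
      rcases eq_or_ne m c with h3 | h3 <;>
    simp_all [dswapX, fswapX, Equiv.Perm.mul_apply, hab.symm, hbc.symm, hac.symm]

lemma comm_ddX (a b c d : ℕ) (h1 : a ≠ c) (h2 : a ≠ d) (h3 : b ≠ c) (h4 : b ≠ d) :
    dswapX a b * dswapX c d = dswapX c d * dswapX a b := by
  ext ⟨m, x⟩ <;>
  · rcases eq_or_ne m a with g1 | g1 <;> rcases eq_or_ne m b with g2 | g2 <;>
      rcases eq_or_ne m c with g3 | g3 <;> rcases eq_or_ne m d with g4 | g4 <;>
    simp_all [dswapX, Equiv.Perm.mul_apply, h1.symm, h2.symm, h3.symm, h4.symm]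

lemma comm_dfX (a b c d : ℕ) (h1 : a ≠ c) (h2 : a ≠ d) (h3 : b ≠ c) (h4 : b ≠ d) :
    dswapX a b * fswapX c d = fswapX c d * dswapX a b := by
  ext ⟨m, x⟩ <;>
  · rcases eq_or_ne m a with g1 | g1 <;> rcases eq_or_ne m b with g2 | g2 <;>
      rcases eq_or_ne m c with g3 | g3 <;> rcases eq_or_ne m d with g4 | g4 <;>
    simp_all [dswapX, fswapX, Equiv.Perm.mul_apply, h1.symm, h2.symm, h3.symm, h4.symm]

lemma comm_sameX (a b : ℕ) (hab : a ≠ b) :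
    dswapX a b * fswapX a b = fswapX a b * dswapX a b := by
  ext ⟨m, x⟩ <;>
  · rcases eq_or_ne m a with g1 | g1 <;> rcases eq_or_ne m b with g2 | g2 <;>
    simp_all [dswapX, fswapX, Equiv.Perm.mul_apply, hab.symm]

lemma ne_dfX (a b : ℕ) : dswapX a b ≠ fswapX a b := by
  intro h'
  have := congrArg (fun e => (e : Equiv.Perm (ℕ × Bool)) (a, true)) h'
  simp [dswapX, fswapX] at this

/-- The images of the generators of `A[D_n]` in the signed permutation representation. -/
def repGenX (n i : ℕ) : Equiv.Perm (ℕ × Bool) :=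
  if i = n - 1 then fswapX (n - 2) (n - 1) else dswapX i (i + 1)

lemma relsatX (n : ℕ) (hn : 6 ≤ n) :
    ∀ r ∈ ArelD n, FreeGroup.lift (fun i : Fin n => repGenX n i.val) r = 1 := by
  rintro r ⟨i, j, hij, hcase⟩
  have hb : j.val < n := j.isLt
  rcases hcase with ⟨hadj, rfl⟩ | ⟨hnadj, rfl⟩
  · simp only [braidRel, map_mul, map_inv, FreeGroup.lift_apply_of]
    rw [mul_inv_eq_one]
    rcases hadj with ⟨hj, hle⟩ | ⟨hi, hj⟩
    · have h1 : repGenX n i.val = dswapX i.val (i.val + 1) := if_neg (by omega)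
      have h2 : repGenX n j.val = dswapX j.val (j.val + 1) := if_neg (by omega)
      rw [h1, h2, hj]
      exact braid_ddX _ _ _ (by omega) (by omega) (by omega)
    · have h1 : repGenX n i.val = dswapX (n - 3) (n - 2) := by
        rw [repGenX, if_neg (by omega), hi]; congr 1; omega
      have h2 : repGenX n j.val = fswapX (n - 2) (n - 1) := by
        rw [repGenX, hj, if_pos rfl]
      rw [h1, h2]
      exact braid_dfX _ _ _ (by omega) (by omega) (by omega)
  · simp only [commRel, map_mul, map_inv, FreeGroup.lift_apply_of]
    rw [mul_inv_eq_one]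
    by_cases hjn : j.val = n - 1
    · have h2 : repGenX n j.val = fswapX (n - 2) (n - 1) := by
        rw [repGenX, hjn, if_pos rfl]
      by_cases hin : i.val = n - 2
      · have h1 : repGenX n i.val = dswapX (n - 2) (n - 1) := by
          rw [repGenX, if_neg (by omega), hin]; congr 1; omega
        rw [h1, h2]
        exact comm_sameX _ _ (by omega)
      · have hile : i.val ≤ n - 4 := by
          have h3 : ¬(i.val = n - 3 ∧ j.val = n - 1) := fun hc => hnadj (Or.inr hc)
          omega
        have h1 : repGenX n i.val = dswapX i.val (i.val + 1) := if_neg (by omega)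
        rw [h1, h2]
        exact comm_dfX _ _ _ _ (by omega) (by omega) (by omega) (by omega)
    · have hj2 : j.val ≤ n - 2 := by omega
      have hne : j.val ≠ i.val + 1 := fun hc => hnadj (Or.inl ⟨hc, by omega⟩)
      have h1 : repGenX n i.val = dswapX i.val (i.val + 1) := if_neg (by omega)
      have h2 : repGenX n j.val = dswapX j.val (j.val + 1) := if_neg (by omega)
      rw [h1, h2]
      exact comm_ddX _ _ _ _ (by omega) (by omega) (by omega) (by omega)

/-- The signed permutation representation of `A[D_n]`. -/
def repDX (n : ℕ) (hn : 6 ≤ n) : ArtinD n →* Equiv.Perm (ℕ × Bool) :=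
  PresentedGroup.toGroup (relsatX n hn)

lemma gD_neX (n : ℕ) (hn : 6 ≤ n) : gD n (n - 2) ≠ gD n (n - 1) := by
  intro h
  have h2 : n - 2 < n := by omega
  have h1 : n - 1 < n := by omega
  rw [gD, gD, dif_pos h2, dif_pos h1] at h
  have hrep := congrArg (repDX n hn) h
  simp only [repDX, PresentedGroup.toGroup.of] at hrep
  have e1 : repGenX n (n - 2) = dswapX (n - 2) (n - 1) := by
    rw [repGenX, if_neg (by omega)]; congr 1; omega
  have e2 : repGenX n (n - 1) = fswapX (n - 2) (n - 1) := by
    rw [repGenX, if_pos rfl]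
  rw [e1, e2] at hrep
  exact ne_dfX _ _ hrep

end InjEndoAux

/-- For `n ≥ 6`, an injective endomorphism `φ` of `A[D_n]` satisfies `φ(t_{n-1}) ≠ φ(t_n)`;
consequently, given the classification of endomorphisms of `A[D_n]` into (1) cyclic,
(2) conjugates of `ψ ∘ β_{p,q} ∘ π` with `ψ ∈ ⟨ζ, χ⟩`, and (3) conjugates of `ψ ∘ γ_p`
with `ψ ∈ ⟨ζ, χ⟩`, every injective endomorphism is of type (3). -/
theorem injective_endomorphism_typeD (n : ℕ) (hn : 6 ≤ n)
    (φ : ArtinD n →* ArtinD n) (hinj : Function.Injective φ) :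
    φ (gD n (n - 2)) ≠ φ (gD n (n - 1)) ∧
    (((∃ u : ArtinD n, ∀ i < n, φ (gD n i) = u) ∨
      (∃ (w : ArtinD n) (ψ : MulAut (ArtinD n)) (p q : ℤ), DiagLike n ψ ∧
        ∀ i < n, φ (gD n i) =
          w * ψ (gD n (min i (n - 2)) * (deltaY n) ^ (2 * p) * (deltaD n) ^ (kap n * q)) * w⁻¹) ∨
      (∃ (w : ArtinD n) (ψ : MulAut (ArtinD n)) (p : ℤ), DiagLike n ψ ∧
        ∀ i < n, φ (gD n i) = w * ψ (gD n i * (deltaD n) ^ (kap n * p)) * w⁻¹)) →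
     (∃ (w : ArtinD n) (ψ : MulAut (ArtinD n)) (p : ℤ), DiagLike n ψ ∧
        ∀ i < n, φ (gD n i) = w * ψ (gD n i * (deltaD n) ^ (kap n * p)) * w⁻¹)) := by
  have hne : φ (gD n (n - 2)) ≠ φ (gD n (n - 1)) := fun h => gD_neX n hn (hinj h)
  refine ⟨hne, ?_⟩
  rintro (⟨u, hu⟩ | ⟨w, ψ, p, q, hψ, hw⟩ | h3)
  · exact absurd ((hu _ (by omega)).trans (hu _ (by omega)).symm) hne
  · exfalso
    apply hne
    have e1 := hw (n - 2) (by omega)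
    have e2 := hw (n - 1) (by omega)
    rw [show min (n - 2) (n - 2) = n - 2 by omega] at e1
    rw [show min (n - 1) (n - 2) = n - 2 by omega] at e2
    rw [e1, e2]
  · exact h3
end
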